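/- Let Φ be a monotone function on finite sets of primers defined by Φ(P) = Σ_{i=1}^n min(L, |f̄^i(P)| + |r̄^i(P)|), where f̄^i(P) and r̄^i(P) are the longest prefixes of fixed strings f^i and r^i covered by some primer in P (lengths given by the maximum hybridization position of any primer of P, or 0 if none). Then Φ is subadditive in the following sense: for all finite sets A, B, Φ(A ∪ B) ≤ Φ(A) + Σ_{p∈B} (Φ(A ∪ {p}) − Φ(A)). -/

import Mathlib

/-! Each maximum `P ↦ max_{p ∈ P} pos(p, s)` is monotone in `P`, and adding a primer to a
larger set raises it by less. The cap `min L (· + ·)` preserves this, so every summand of `Φ`,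
hence `Φ` itself, is submodular: marginal gains shrink as the set grows. Telescoping `Φ(A ∪ B)`
over the elements of `B` and bounding each gain by the gain at `A` gives the claim. -/

open Finset

/-- The potential of a set `P` of primers: `Φ(P) = Σ_i min(L, |f̄ⁱ(P)| + |r̄ⁱ(P)|)`,
where the length of the longest covered prefix of the `i`-th forward (resp. reverse)
string is the maximum hybridization position of a primer of `P` on it (0 if `P = ∅`). -/
def primerPotential {α : Type*} [DecidableEq α] (n L : ℕ)
    (posf posr : α → Fin n → ℕ) (P : Finset α) : ℕ :=
  ∑ i : Fin n, min L (P.sup (fun p => posf p i) + P.sup (fun p => posr p i))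

section DiminishingReturns

variable {α β : Type*} [DecidableEq α] [AddCommGroup β] [PartialOrder β] [IsOrderedAddMonoid β]

/-- Submodularity of a set function, in its marginal-gain form. -/
def HasDiminishingReturns (f : Finset α → β) : Prop :=
  ∀ ⦃A A' : Finset α⦄, A ⊆ A' → ∀ p, f (insert p A') - f A' ≤ f (insert p A) - f A

theorem HasDiminishingReturns.sum {ι : Type*} {s : Finset ι} {f : ι → Finset α → β}
    (hf : ∀ i ∈ s, HasDiminishingReturns (f i)) :
    HasDiminishingReturns (fun A => ∑ i ∈ s, f i A) := by
  intro A A' hAA' p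
  simp only [← sum_sub_distrib]
  exact sum_le_sum fun i hi => hf i hi hAA' p

theorem HasDiminishingReturns.le_add_sum_sub {f : Finset α → β} (hf : HasDiminishingReturns f)
    (A B : Finset α) : f (A ∪ B) ≤ f A + ∑ p ∈ B, (f (insert p A) - f A) := by
  induction B using Finset.induction_on with
  | empty => simp
  | insert b B hb ih =>
    have hgain := hf (subset_union_left : A ⊆ A ∪ B) b
    rw [sum_insert hb, union_insert]
    calc f (insert b (A ∪ B)) = (f (insert b (A ∪ B)) - f (A ∪ B)) + f (A ∪ B) := by abel
      _ ≤ (f (insert b A) - f A) + (f A + ∑ p ∈ B, (f (insert p A) - f A)) := add_le_add hgain ih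
      _ = _ := by abel

end DiminishingReturns

theorem min_add_max_add_max_add_min_le (L x y a r a' r' : ℕ) (ha : a ≤ a') (hr : r ≤ r') :
    min L (max x a' + max y r') + min L (a + r) ≤
      min L (max x a + max y r) + min L (a' + r') := by
  omega

theorem hasDiminishingReturns_min_sup_add_sup {α : Type*} [DecidableEq α] (L : ℕ)
    (u v : α → ℕ) :
    HasDiminishingReturns (fun P : Finset α => ((min L (P.sup u + P.sup v) : ℕ) : ℤ)) := by
  intro A A' hAA' p
  have := min_add_max_add_max_add_min_le L (u p) (v p) _ _ _ _ (sup_mono (f := u) hAA')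
    (sup_mono (f := v) hAA')
  simp only [sup_insert]
  omega

/-- Subadditivity of the potential `Φ`:
`Φ(A ∪ B) ≤ Φ(A) + Σ_{p ∈ B} (Φ(A ∪ {p}) − Φ(A))`. -/
theorem primerPotential_subadditive {α : Type*} [DecidableEq α] (n L : ℕ)
    (posf posr : α → Fin n → ℕ) (A B : Finset α) :
    (primerPotential n L posf posr (A ∪ B) : ℤ) ≤
      (primerPotential n L posf posr A : ℤ) +
      ∑ p ∈ B, ((primerPotential n L posf posr (insert p A) : ℤ) -
        (primerPotential n L posf posr A : ℤ)) := by
  have hΦ : HasDiminishingReturns (fun P => (primerPotential n L posf posr P : ℤ)) := by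
    simp only [primerPotential, Nat.cast_sum]
    exact HasDiminishingReturns.sum fun i _ =>
      hasDiminishingReturns_min_sup_add_sup L (posf · i) (posr · i)
  exact hΦ.le_add_sum_sub A B
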